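/- arXiv:1912.00721 — 3 statements merged into one kernel-verified Lean document; each statement's English description precedes it below -/
import Mathlib

section
/- If u is a positive steady state of the Keller-Segel system, i.e. 0 = Δu − ∇·(u∇Φ_u) and −ΔΦ_u = u on ℝ², and u is smooth, positive and sufficiently decaying so that ∫_{ℝ²} u |∇(log u − Φ_u)|² dx = 0, then u = λ e^{Φ_u} for some positive constant λ; consequently v = Φ_u solves Δv + λ e^v = 0. -/
open MeasureTheory Filter

noncomputable section

abbrev E2 : Type := EuclideanSpace ℝ (Fin 2)

def pd (i : Fin 2) (f : E2 → ℝ) (x : E2) : ℝ :=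
  fderiv ℝ f x (EuclideanSpace.single i 1)

def lap (f : E2 → ℝ) (x : E2) : ℝ :=
  ∑ i, pd i (fun y => pd i f y) x

def divg (F : E2 → Fin 2 → ℝ) (x : E2) : ℝ :=
  ∑ i, fderiv ℝ (fun y => F y i) x (EuclideanSpace.single i 1)

/-- a smooth positive steady state of the Keller-Segel system with
`∫ u |∇(log u - Φ_u)|² dx = 0` satisfies `u = λ e^{Φ_u}` for some `λ > 0`; consequently
`v = Φ_u` solves `Δv + λ e^v = 0`. -/
theorem steady_state_rigidity (u Φ : E2 → ℝ)
    (hu : ContDiff ℝ (⊤ : ℕ∞) u) (hΦ : ContDiff ℝ (⊤ : ℕ∞) Φ)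
    (hpos : ∀ x, 0 < u x)
    (hpoisson : ∀ x, - lap Φ x = u x)
    (hsteady : ∀ x, lap u x - divg (fun y i => u y * pd i Φ y) x = 0)
    (hintegr : Integrable
      (fun x => u x * ∑ i, (pd i (fun y => Real.log (u y) - Φ y) x)^2))
    (hzero : (∫ x, u x * ∑ i, (pd i (fun y => Real.log (u y) - Φ y) x)^2) = 0) :
    ∃ lam : ℝ, 0 < lam ∧ (∀ x, u x = lam * Real.exp (Φ x)) ∧
      (∀ x, lap Φ x + lam * Real.exp (Φ x) = 0) := by
  set g : E2 → ℝ := fun y => Real.log (u y) - Φ y with hg_def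
  have hg : ContDiff ℝ (⊤ : ℕ∞) g :=
    (hu.log (fun x => (hpos x).ne')).sub hΦ
  -- the integrand is nonneg
  have hnonneg : ∀ x, 0 ≤ u x * ∑ i, (pd i g x)^2 := fun x =>
    mul_nonneg (hpos x).le (Finset.sum_nonneg fun i _ => sq_nonneg _)
  -- continuity of the integrand
  have hcontf : Continuous (fun x => u x * ∑ i, (pd i g x)^2) := by
    refine (hu.continuous).mul (continuous_finset_sum _ fun i _ => ?_)
    exact ((hg.continuous_fderiv (by simp)).clm_apply continuous_const).pow 2
  -- integrand vanishes a.e., hence everywhere by continuity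
  have hae : (fun x => u x * ∑ i, (pd i g x)^2) =ᵐ[volume] (fun _ => (0:ℝ)) :=
    (integral_eq_zero_iff_of_nonneg (fun x => hnonneg x) hintegr).mp hzero
  have heq : (fun x => u x * ∑ i, (pd i g x)^2) = (fun _ => (0:ℝ)) :=
    (hcontf.ae_eq_iff_eq volume continuous_const).mp hae
  -- so each partial derivative of g vanishes
  have hpd : ∀ x i, pd i g x = 0 := by
    intro x i
    have hx : u x * ∑ j, (pd j g x)^2 = 0 := congrFun heq x
    have hsum : ∑ j, (pd j g x)^2 = 0 := by
      rcases mul_eq_zero.mp hx with h | h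
      · exact absurd h (hpos x).ne'
      · exact h
    have := (Finset.sum_eq_zero_iff_of_nonneg
      (fun j _ => sq_nonneg (pd j g x))).mp hsum i (Finset.mem_univ i)
    exact pow_eq_zero_iff (n := 2) (by norm_num) |>.mp this
  -- hence fderiv g = 0 everywhere
  have hfd : ∀ x, fderiv ℝ g x = 0 := by
    intro x
    have hlin : ((fderiv ℝ g x : E2 →L[ℝ] ℝ) : E2 →ₗ[ℝ] ℝ) = (0 : E2 →ₗ[ℝ] ℝ) := by
      apply Module.Basis.ext (EuclideanSpace.basisFun (Fin 2) ℝ).toBasis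
      intro i
      have : (EuclideanSpace.basisFun (Fin 2) ℝ).toBasis i = EuclideanSpace.single i 1 := by
        simp [EuclideanSpace.basisFun_apply]
      rw [this]
      simpa [pd] using hpd x i
    ext v
    exact congrFun (congrArg DFunLike.coe hlin) v
  have hdiff : Differentiable ℝ g := hg.differentiable (by simp)
  have hconst : ∀ x, g x = g 0 := fun x =>
    is_const_of_fderiv_eq_zero hdiff hfd x 0
  refine ⟨Real.exp (g 0), Real.exp_pos _, ?_, ?_⟩
  · intro x
    have : Real.log (u x) = g 0 + Φ x := by
      have h := hconst x
      have hg0 : g 0 = Real.log (u 0) - Φ 0 := rfl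
      simp only [hg_def] at h
      rw [hg0]; linarith
    calc u x = Real.exp (Real.log (u x)) := (Real.exp_log (hpos x)).symm
      _ = Real.exp (g 0 + Φ x) := by rw [this]
      _ = Real.exp (g 0) * Real.exp (Φ x) := Real.exp_add _ _
  · intro x
    have h1 : lap Φ x = - u x := by linarith [hpoisson x]
    have h2 : u x = Real.exp (g 0) * Real.exp (Φ x) := by
      have : Real.log (u x) = g 0 + Φ x := by
        have h := hconst x
        have hg0 : g 0 = Real.log (u 0) - Φ 0 := rfl
        simp only [hg_def] at h
        rw [hg0]; linarith
      calc u x = Real.exp (Real.log (u x)) := (Real.exp_log (hpos x)).symm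
        _ = Real.exp (g 0 + Φ x) := by rw [this]
        _ = Real.exp (g 0) * Real.exp (Φ x) := Real.exp_add _ _
    rw [h1, h2]; ring
end
end

section
/- The two functions ψ₀(r) = r²/(1+r²)² and ψ̃₀(r) = (r⁴ + 4r² ln r − 1)/(1+r²)² form a fundamental system of solutions of 𝒜₀ψ = 0 on (0,∞), where 𝒜₀f = ∂_r²f − (1/r)∂_r f + (1/r)∂_r(Qf) and Q(r) = 4r²/(1+r²). -/
open MeasureTheory Filter

noncomputable section

/-- `Q(r) = 4r²/(1+r²)`. -/
def Qprof (r : ℝ) : ℝ := 4*r^2/(1+r^2)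

/-- The linearized operator `𝒜₀f = f'' - f'/r + (Qf)'/r`. -/
def A0 (f : ℝ → ℝ) (r : ℝ) : ℝ :=
  deriv (deriv f) r - deriv f r / r + deriv (fun s => Qprof s * f s) r / r

/-- `ψ₀(r) = r²/(1+r²)²`. -/
def psi0 (r : ℝ) : ℝ := r^2/(1+r^2)^2

/-- `ψ̃₀(r) = (r⁴ + 4r² ln r - 1)/(1+r²)²`. -/
def psit (r : ℝ) : ℝ := (r^4 + 4*r^2*Real.log r - 1)/(1+r^2)^2

/-!
Since `r f'' - f' + (Qf)' = (r f' + (Q - 2) f)'`, the equation `𝒜₀f = 0` has the first integral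
`r f' + (Q - 2) f = c`. One checks that `ψ₀` solves it with `c = 0` and `ψ̃₀` with `c = 2`.
Eliminating the derivatives through these first-order equations, the Wronskian becomes
`ψ₀ ψ̃₀' - ψ₀' ψ̃₀ = 2 ψ₀ / r = 2r/(1+r²)²`, which is positive.
-/

open Topology

theorem ode_eq_zero_of_first_integral {f q : ℝ → ℝ} {c r : ℝ} (hr : r ≠ 0)
    (hq : DifferentiableAt ℝ q r)
    (hf : ∀ᶠ s in 𝓝 r, HasDerivAt f ((c + (2 - q s) * f s) / s) s) :
    deriv (deriv f) r - deriv f r / r + deriv (fun s => q s * f s) r / r = 0 := by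
  set g : ℝ → ℝ := fun s => (c + (2 - q s) * f s) / s with hg_def
  have hfr : HasDerivAt f (g r) r := hf.self_of_nhds
  have hqr : HasDerivAt q (deriv q r) r := hq.hasDerivAt
  have hg : HasDerivAt g (((0 + (-deriv q r * f r + (2 - q r) * g r)) * r
      - (c + (2 - q r) * f r) * 1) / r ^ 2) r :=
    ((hasDerivAt_const r c).fun_add ((hqr.const_sub 2).fun_mul hfr)).fun_div (hasDerivAt_id' r) hr
  have hderiv : deriv f =ᶠ[𝓝 r] g := hf.mono fun s hs => hs.deriv
  have hgr : c + (2 - q r) * f r = r * g r := by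
    rw [hg_def]; field_simp
  rw [hderiv.deriv_eq, hg.deriv, hfr.deriv, (hqr.fun_mul hfr).deriv, hgr]
  field_simp
  ring

theorem differentiableAt_Qprof (r : ℝ) : DifferentiableAt ℝ Qprof r := by
  unfold Qprof
  fun_prop (disch := positivity)

theorem hasDerivAt_one_add_sq_sq (r : ℝ) :
    HasDerivAt (fun s : ℝ => (1 + s ^ 2) ^ 2) (2 * (1 + r ^ 2) * (2 * r)) r := by
  simpa using ((hasDerivAt_pow 2 r).const_add 1).fun_pow 2

theorem hasDerivAt_psi0 {r : ℝ} (hr : r ≠ 0) :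
    HasDerivAt psi0 ((2 - Qprof r) * psi0 r / r) r := by
  have h := (hasDerivAt_pow 2 r).fun_div (hasDerivAt_one_add_sq_sq r) (by positivity)
  refine h.congr_deriv ?_
  unfold Qprof psi0
  field_simp
  ring

theorem hasDerivAt_psit {r : ℝ} (hr : 0 < r) :
    HasDerivAt psit ((2 + (2 - Qprof r) * psit r) / r) r := by
  have hnum := ((hasDerivAt_pow 4 r).fun_add
    (((hasDerivAt_pow 2 r).const_mul 4).fun_mul (Real.hasDerivAt_log hr.ne'))).sub_const 1
  have h := hnum.fun_div (hasDerivAt_one_add_sq_sq r) (by positivity)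
  refine h.congr_deriv ?_
  unfold Qprof psit
  field_simp
  ring

/-- `ψ₀` and `ψ̃₀` form a fundamental system of solutions of `𝒜₀ψ = 0` on
`(0,∞)`: both solve the equation and their Wronskian does not vanish. -/
theorem fundamental_system :
    ∀ r : ℝ, 0 < r →
      A0 psi0 r = 0 ∧ A0 psit r = 0 ∧
      psi0 r * deriv psit r - deriv psi0 r * psit r ≠ 0 := by
  intro r hr
  have h0 : ∀ᶠ s in 𝓝 r, HasDerivAt psi0 ((0 + (2 - Qprof s) * psi0 s) / s) s :=
    (eventually_ne_nhds hr.ne').mono fun s hs => by simpa only [zero_add] using hasDerivAt_psi0 hs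
  have ht : ∀ᶠ s in 𝓝 r, HasDerivAt psit ((2 + (2 - Qprof s) * psit s) / s) s :=
    (eventually_gt_nhds hr).mono fun s hs => hasDerivAt_psit hs
  refine ⟨ode_eq_zero_of_first_integral hr.ne' (differentiableAt_Qprof r) h0,
    ode_eq_zero_of_first_integral hr.ne' (differentiableAt_Qprof r) ht, ?_⟩
  have hwronskian : psi0 r * deriv psit r - deriv psi0 r * psit r = 2 * psi0 r / r := by
    rw [h0.self_of_nhds.deriv, ht.self_of_nhds.deriv]
    field_simp
    ring
  rw [hwronskian]
  unfold psi0
  positivity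

end
end

section
/- Hardy inequality with weight ω₀: for f:[0,∞)→ℝ with ∫_0^∞ (|f|²/(1+r²) + |∂_r f|²) ω₀(r)/r dr < ∞, where ω₀(r) = 1/U(r) = (1+r²)²/8, one has ∫_0^∞ |∂_r f|² ω₀/r dr ≳ ∫_0^∞ f²/(1+r²) · ω₀/r dr. -/
/-!
Put `φ(r) = -(log r + r²/2)/32`, so that `φ' = -(1+r²)/(32r)` and
`φ² ≤ (ω₀/r) · (1+r²)/(64r)`. By AM-GM,
`(f²φ)' = 2ff'φ + f²φ' ≤ f'² ω₀/r - (1/8) f²/(1+r²) · ω₀/r`,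
and integrating over `[a, b]` gives the inequality with `c = 1/8` up to the boundary terms
`(f²φ)(a) - (f²φ)(b)`. These become small along suitable `a → 0` and `b → ∞`: near `0`,
`|f²φ| ≲ f² (1 - log r)`, near `∞`, `|f²φ| ≲ f² r²`, and if either stayed above `η`, the
finite integral of `f²/(1+r²) · ω₀/r = f² (1+r²)/(8r)` would dominate `η ∫ dr/(r(1 - log r))`
near `0`, resp. `η ∫ dr/r` near `∞`, both of which diverge.
-/

open MeasureTheory Filter

noncomputable section

/-- The weight `ω₀(r) = 1/U(r) = (1+r²)²/8`. -/
def omega0 (r : ℝ) : ℝ := (1+r^2)^2/8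

open Set Topology Asymptotics Real

theorem two_mul_mul_mul_le_of_sq_le {a b p W K : ℝ} (hW : 0 < W) (h : p ^ 2 ≤ W * K) :
    2 * a * b * p ≤ b ^ 2 * W + a ^ 2 * K := by
  have : a ^ 2 * p ^ 2 ≤ a ^ 2 * (W * K) := mul_le_mul_of_nonneg_left h (sq_nonneg a)
  nlinarith [sq_nonneg (b * W - a * p)]

theorem frequently_lt_mul_norm_deriv {F g : ℝ → ℝ} {l : Filter ℝ} [NeBot l]
    [TendstoIxxClass Icc l l] [IsMeasurablyGenerated l]
    (hF : ∀ᶠ x in l, DifferentiableAt ℝ F x) (hFtop : Tendsto (fun x => ‖F x‖) l atTop)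
    (hg : IntegrableAtFilter g l) {η : ℝ} (hη : 0 < η) :
    ∃ᶠ x in l, g x < η * ‖deriv F x‖ := by
  intro hev
  obtain ⟨s, hsl, hgs⟩ := hg
  obtain ⟨t, htl, htm, hle⟩ := (hev.mono fun x h => not_lt.1 h).exists_measurable_mem
  refine not_integrableOn_of_tendsto_norm_atTop_of_deriv_isBigO_filter l (inter_mem hsl htl) hF
    hFtop (isBigO_refl _ _) ?_
  refine ((hgs.mono_set inter_subset_left).div_const η).mono' (aestronglyMeasurable_deriv _ _) ?_
  refine ae_restrict_of_ae_restrict_of_subset inter_subset_right ?_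
  exact (ae_restrict_iff' htm).2 (ae_of_all _ fun x hx => (le_div_iff₀' hη).2 (hle x hx))

theorem tendsto_setIntegral_Ioc_nhdsGT_atTop {B : ℝ → ℝ} {a : ℝ} (hB : IntegrableOn B (Ioi a)) :
    Tendsto (fun p : ℝ × ℝ => ∫ x in Ioc p.1 p.2, B x) (𝓝[>] a ×ˢ atTop)
      (𝓝 (∫ x in Ioi a, B x)) := by
  have hcover : AECover (volume.restrict (Ioi a)) (𝓝[>] a ×ˢ atTop)
      (fun p : ℝ × ℝ => Ioc p.1 p.2) :=
    (aecover_Ioi_of_Ioi (tendsto_fst.mono_right nhdsWithin_le_nhds)).inter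
      (aecover_Iic tendsto_snd)
  refine (hcover.integral_tendsto_of_countably_generated hB).congr' ?_
  filter_upwards [tendsto_fst.eventually self_mem_nhdsWithin] with p hp
  rw [Measure.restrict_restrict_of_subset
    (Ioc_subset_Ioi_self.trans (Ioi_subset_Ioi (le_of_lt hp)))]

theorem mul_setIntegral_Ioi_le_of_forall_Ioc {B G : ℝ → ℝ} {c I : ℝ}
    (hB : IntegrableOn B (Ioi 0))
    (hIoc : ∀ a b, 0 < a → a ≤ b → c * ∫ x in Ioc a b, B x ≤ I + G a - G b)
    (h0 : ∀ η > 0, ∃ᶠ x in 𝓝[>] 0, |G x| < η) (htop : ∀ η > 0, ∃ᶠ x in atTop, |G x| < η) :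
    c * ∫ x in Ioi 0, B x ≤ I := by
  refine le_of_forall_pos_le_add fun ε hε => ?_
  refine le_of_tendsto_of_frequently
    ((tendsto_setIntegral_Ioc_nhdsGT_atTop hB).const_mul c) ?_
  have hsmall : ∃ᶠ p in 𝓝[>] (0:ℝ) ×ˢ (atTop : Filter ℝ),
      |G p.1| < ε / 2 ∧ |G p.2| < ε / 2 :=
    frequently_prod_and.2 ⟨h0 _ (half_pos hε), htop _ (half_pos hε)⟩
  have hordered : ∀ᶠ p in 𝓝[>] (0:ℝ) ×ˢ (atTop : Filter ℝ), p.1 ∈ Ioo 0 1 ∧ 1 ≤ p.2 :=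
    (tendsto_fst.eventually (Ioo_mem_nhdsGT one_pos)).and
      (tendsto_snd.eventually (eventually_ge_atTop 1))
  refine (hsmall.and_eventually hordered).mono fun p ⟨⟨h1, h2⟩, ⟨hp0, hp1⟩, hp2⟩ => ?_
  have hbound := hIoc p.1 p.2 hp0 (by linarith)
  linarith [(abs_lt.1 h1).2, (abs_lt.1 h2).1]

theorem omega0_div_eq (r : ℝ) : omega0 r / r = (1 + r ^ 2) ^ 2 / (8 * r) := by
  rw [omega0, div_div]

theorem omega0_div_pos {r : ℝ} (hr : 0 < r) : 0 < omega0 r / r := by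
  rw [omega0_div_eq]; positivity

@[fun_prop]
theorem measurable_omega0 : Measurable omega0 := by
  unfold omega0; fun_prop

theorem sq_div_one_add_sq_mul_omega0_div (a r : ℝ) :
    a ^ 2 / (1 + r ^ 2) * (omega0 r / r) = a ^ 2 * ((1 + r ^ 2) / (8 * r)) := by
  rw [omega0_div_eq]
  field_simp

def hardyPhi (r : ℝ) : ℝ := -(log r + r ^ 2 / 2) / 32

theorem hasDerivAt_hardyPhi {r : ℝ} (hr : 0 < r) :
    HasDerivAt hardyPhi (-(1 + r ^ 2) / (32 * r)) r := by
  have h : HasDerivAt hardyPhi (-(r⁻¹ + ↑2 * r ^ (2 - 1) / 2) / 32) r :=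
    (((hasDerivAt_log hr.ne').add ((hasDerivAt_pow 2 r).div_const 2)).neg).div_const 32
  refine h.congr_deriv ?_
  field_simp
  ring

theorem sq_log_add_sq_div_two_mul_le {r : ℝ} (hr : 0 < r) :
    ((log r + r ^ 2 / 2) * r) ^ 2 ≤ 2 * (1 + r ^ 2) ^ 3 := by
  have hlow : -1 ≤ (log r + r ^ 2 / 2) * r := by
    have := mul_le_mul_of_nonneg_right (one_sub_inv_le_log_of_pos hr) hr.le
    rw [sub_mul, inv_mul_cancel₀ hr.ne'] at this
    nlinarith
  have hupp : (log r + r ^ 2 / 2) * r ≤ r ^ 2 + r ^ 3 / 2 := by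
    nlinarith [log_le_sub_one_of_pos hr]
  nlinarith [sq_nonneg (r ^ 2 - r), sq_nonneg (r ^ 3 - r ^ 2), sq_nonneg r]

theorem hardyPhi_sq_le {r : ℝ} (hr : 0 < r) :
    hardyPhi r ^ 2 ≤ omega0 r / r * ((1 + r ^ 2) / (64 * r)) := by
  have h := sq_log_add_sq_div_two_mul_le hr
  rw [omega0_div_eq, hardyPhi]
  rw [mul_pow] at h
  calc (-(log r + r ^ 2 / 2) / 32) ^ 2
        = (log r + r ^ 2 / 2) ^ 2 * r ^ 2 / (1024 * r ^ 2) := by field_simp; ring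
    _ ≤ 2 * (1 + r ^ 2) ^ 3 / (1024 * r ^ 2) := by gcongr
    _ = (1 + r ^ 2) ^ 2 / (8 * r) * ((1 + r ^ 2) / (64 * r)) := by field_simp; ring

theorem two_mul_mul_mul_hardyPhi_add_le {r : ℝ} (hr : 0 < r) (a b : ℝ) :
    2 * a * b * hardyPhi r + a ^ 2 * (-(1 + r ^ 2) / (32 * r)) ≤
      b ^ 2 * (omega0 r / r) - 1 / 8 * (a ^ 2 / (1 + r ^ 2) * (omega0 r / r)) := by
  have h := two_mul_mul_mul_le_of_sq_le (a := a) (b := b) (omega0_div_pos hr) (hardyPhi_sq_le hr)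
  rw [sq_div_one_add_sq_mul_omega0_div]
  have e : -(1 + r ^ 2) / (32 * r) = -(2 * ((1 + r ^ 2) / (64 * r))) := by field_simp; ring
  have e' : (1 + r ^ 2) / (8 * r) = 8 * ((1 + r ^ 2) / (64 * r)) := by field_simp; ring
  rw [e, e']
  linarith

theorem abs_hardyPhi_le_of_lt_one {r : ℝ} (hr0 : 0 < r) (hr1 : r < 1) :
    |hardyPhi r| ≤ (1 - log r) / 32 := by
  have hlog : log r < 0 := log_neg hr0 hr1
  rw [hardyPhi, abs_div, abs_neg, abs_of_pos (by norm_num : (0:ℝ) < 32)]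
  gcongr
  rw [abs_le]
  constructor <;> nlinarith

theorem abs_hardyPhi_le_of_one_le {r : ℝ} (hr : 1 ≤ r) : |hardyPhi r| ≤ 3 * r ^ 2 / 64 := by
  have hlog0 : 0 ≤ log r := log_nonneg hr
  have hlog : log r ≤ r ^ 2 := by nlinarith [log_le_sub_one_of_pos (by linarith : 0 < r)]
  rw [hardyPhi, abs_div, abs_neg, abs_of_pos (by norm_num : (0:ℝ) < 32),
    abs_of_nonneg (by positivity)]
  linarith

theorem hasDerivAt_sq_mul_hardyPhi {f : ℝ → ℝ} {r : ℝ} (hf : DifferentiableAt ℝ f r)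
    (hr : 0 < r) :
    HasDerivAt (fun x => f x ^ 2 * hardyPhi x)
      (2 * f r * deriv f r * hardyPhi r + f r ^ 2 * (-(1 + r ^ 2) / (32 * r))) r := by
  refine (hf.hasDerivAt.pow 2 |>.mul (hasDerivAt_hardyPhi hr)).congr_deriv ?_
  simp only [Pi.pow_apply]
  ring

theorem mul_setIntegral_Ioc_le_sq_mul_hardyPhi_sub {f : ℝ → ℝ} {a b : ℝ}
    (hdiff : ∀ r ∈ Ioi 0, DifferentiableAt ℝ f r)
    (hA : IntegrableOn (fun r => deriv f r ^ 2 * (omega0 r / r)) (Ioi 0))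
    (hB : IntegrableOn (fun r => f r ^ 2 / (1 + r ^ 2) * (omega0 r / r)) (Ioi 0))
    (ha : 0 < a) (hab : a ≤ b) :
    1 / 8 * ∫ r in Ioc a b, f r ^ 2 / (1 + r ^ 2) * (omega0 r / r) ≤
      (∫ r in Ioi 0, deriv f r ^ 2 * (omega0 r / r)) +
        f a ^ 2 * hardyPhi a - f b ^ 2 * hardyPhi b := by
  have hIcc : Icc a b ⊆ Ioi 0 := fun x hx => ha.trans_le hx.1
  have hIoc : Ioc a b ⊆ Ioi 0 := Ioc_subset_Icc_self.trans hIcc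
  have hderiv : ∀ x ∈ Icc a b, HasDerivAt (fun x => f x ^ 2 * hardyPhi x) _ x :=
    fun x hx => hasDerivAt_sq_mul_hardyPhi (hdiff x (hIcc hx)) (hIcc hx)
  have hFTC := intervalIntegral.sub_le_integral_of_hasDeriv_right_of_le hab
    (fun x hx => (hderiv x hx).continuousAt.continuousWithinAt)
    (fun x hx => (hderiv x (Ioo_subset_Icc_self hx)).hasDerivWithinAt)
    (φ := fun r => deriv f r ^ 2 * (omega0 r / r) -
      1 / 8 * (f r ^ 2 / (1 + r ^ 2) * (omega0 r / r)))
    ((hA.mono_set hIcc).sub ((hB.mono_set hIcc).const_mul (1 / 8)))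
    (fun x hx => two_mul_mul_mul_hardyPhi_add_le (hIcc (Ioo_subset_Icc_self hx)) (f x) (deriv f x))
  rw [intervalIntegral.integral_of_le hab, integral_sub (hA.mono_set hIoc)
    ((hB.mono_set hIoc).const_mul _), integral_const_mul] at hFTC
  have hmono : ∫ r in Ioc a b, deriv f r ^ 2 * (omega0 r / r) ≤
      ∫ r in Ioi 0, deriv f r ^ 2 * (omega0 r / r) := by
    refine setIntegral_mono_set hA ?_ hIoc.eventuallyLE
    exact (ae_restrict_iff' measurableSet_Ioi).2
      (ae_of_all _ fun r hr => mul_nonneg (sq_nonneg _) (omega0_div_pos hr).le)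
  linarith

theorem frequently_abs_sq_mul_hardyPhi_lt {f F : ℝ → ℝ} {l : Filter ℝ} [NeBot l]
    [TendstoIxxClass Icc l l] [IsMeasurablyGenerated l]
    (hF : ∀ᶠ x in l, DifferentiableAt ℝ F x) (hFtop : Tendsto (fun x => ‖F x‖) l atTop)
    (hB : IntegrableAtFilter (fun r => f r ^ 2 / (1 + r ^ 2) * (omega0 r / r)) l)
    (hφ : ∀ᶠ r in l, |hardyPhi r| * ‖deriv F r‖ ≤ (1 + r ^ 2) / (8 * r))
    {η : ℝ} (hη : 0 < η) : ∃ᶠ r in l, |f r ^ 2 * hardyPhi r| < η := by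
  refine ((frequently_lt_mul_norm_deriv hF hFtop hB hη).and_eventually hφ).mono
    fun r ⟨hlt, hle⟩ => ?_
  rw [sq_div_one_add_sq_mul_omega0_div] at hlt
  have hN : 0 < ‖deriv F r‖ := by
    have hv : 0 ≤ (1 + r ^ 2) / (8 * r) := le_trans (by positivity) hle
    by_contra! h
    nlinarith [mul_nonneg (sq_nonneg (f r)) hv]
  rw [abs_mul, abs_of_nonneg (sq_nonneg _)]
  refine lt_of_mul_lt_mul_right ?_ hN.le
  calc f r ^ 2 * |hardyPhi r| * ‖deriv F r‖ ≤ f r ^ 2 * ((1 + r ^ 2) / (8 * r)) := by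
        rw [mul_assoc]; exact mul_le_mul_of_nonneg_left hle (sq_nonneg _)
    _ < η * ‖deriv F r‖ := hlt

theorem frequently_abs_sq_mul_hardyPhi_lt_nhdsGT {f : ℝ → ℝ}
    (hB : IntegrableOn (fun r => f r ^ 2 / (1 + r ^ 2) * (omega0 r / r)) (Ioi 0))
    {η : ℝ} (hη : 0 < η) : ∃ᶠ r in 𝓝[>] 0, |f r ^ 2 * hardyPhi r| < η := by
  have hunit : ∀ᶠ r in 𝓝[>] (0:ℝ), r ∈ Ioo 0 1 := Ioo_mem_nhdsGT one_pos
  have hderiv : ∀ᶠ r in 𝓝[>] (0:ℝ),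
      HasDerivAt (fun x => log (1 - log x)) (-r⁻¹ / (1 - log r)) r :=
    hunit.mono fun r hr => ((hasDerivAt_log hr.1.ne').const_sub 1).log
      (by linarith [log_neg hr.1 hr.2])
  have htop : Tendsto (fun r => 1 - log r) (𝓝[>] 0) atTop :=
    (tendsto_atTop_add_const_left _ 1
      (tendsto_neg_atBot_atTop.comp tendsto_log_nhdsGT_zero)).congr
      fun r => by simp [sub_eq_add_neg]
  refine frequently_abs_sq_mul_hardyPhi_lt (hderiv.mono fun r hr => hr.differentiableAt)
    (tendsto_norm_atTop_atTop.comp (tendsto_log_atTop.comp htop)) ⟨Ioi 0, self_mem_nhdsWithin, hB⟩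
    ?_ hη
  filter_upwards [hunit, hderiv] with r ⟨hr0, hr1⟩ hr
  have hL : 0 < 1 - log r := by linarith [log_neg hr0 hr1]
  rw [hr.deriv, norm_div, norm_neg, Real.norm_of_nonneg (inv_nonneg.2 hr0.le),
    Real.norm_of_nonneg hL.le]
  calc |hardyPhi r| * (r⁻¹ / (1 - log r))
        ≤ (1 - log r) / 32 * (r⁻¹ / (1 - log r)) := by
          gcongr; exact abs_hardyPhi_le_of_lt_one hr0 hr1
    _ ≤ (1 + r ^ 2) / (8 * r) := by
        field_simp
        nlinarith

theorem frequently_abs_sq_mul_hardyPhi_lt_atTop {f : ℝ → ℝ}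
    (hB : IntegrableOn (fun r => f r ^ 2 / (1 + r ^ 2) * (omega0 r / r)) (Ioi 0))
    {η : ℝ} (hη : 0 < η) : ∃ᶠ r in atTop, |f r ^ 2 * hardyPhi r| < η := by
  refine frequently_abs_sq_mul_hardyPhi_lt (F := log)
    ((eventually_gt_atTop 0).mono fun r hr => differentiableAt_log hr.ne')
    (tendsto_norm_atTop_atTop.comp tendsto_log_atTop) ⟨Ioi 0, Ioi_mem_atTop 0, hB⟩ ?_ hη
  filter_upwards [eventually_ge_atTop 1] with r hr
  rw [deriv_log, Real.norm_of_nonneg (inv_nonneg.2 (by linarith))]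
  calc |hardyPhi r| * r⁻¹ ≤ 3 * r ^ 2 / 64 * r⁻¹ := by
        gcongr; exact abs_hardyPhi_le_of_one_le hr
    _ ≤ (1 + r ^ 2) / (8 * r) := by
        field_simp
        nlinarith

theorem integrableOn_hardy_terms {f : ℝ → ℝ} (hf : ContinuousOn f (Ioi 0))
    (hS : IntegrableOn (fun r => (f r ^ 2 / (1 + r ^ 2) + deriv f r ^ 2) * (omega0 r / r))
      (Ioi 0)) :
    IntegrableOn (fun r => f r ^ 2 / (1 + r ^ 2) * (omega0 r / r)) (Ioi 0) ∧
      IntegrableOn (fun r => deriv f r ^ 2 * (omega0 r / r)) (Ioi 0) := by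
  have hfm : AEMeasurable f (volume.restrict (Ioi 0)) :=
    (hf.aestronglyMeasurable measurableSet_Ioi).aemeasurable
  have hpos : ∀ᵐ r ∂volume.restrict (Ioi 0), 0 < omega0 r / r :=
    (ae_restrict_iff' measurableSet_Ioi).2 (ae_of_all _ fun r => omega0_div_pos)
  constructor
  · refine integrable_of_le_of_le (g₁ := 0)
      (by fun_prop : AEMeasurable _ _).aestronglyMeasurable
      (hpos.mono fun r hr => ?_) (hpos.mono fun r hr => ?_) (integrable_zero _ _ _) hS
    · dsimp only [Pi.zero_apply]; positivity
    · dsimp only; gcongr; exact le_add_of_nonneg_right (sq_nonneg _)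
  · refine integrable_of_le_of_le (g₁ := 0)
      (by fun_prop : Measurable _).aestronglyMeasurable
      (hpos.mono fun r hr => ?_) (hpos.mono fun r hr => ?_) (integrable_zero _ _ _) hS
    · dsimp only [Pi.zero_apply]; positivity
    · dsimp only; gcongr; exact le_add_of_nonneg_left (by positivity)

/-- Hardy inequality with weight `ω₀`: there is a universal constant `c > 0`
such that for every `f` with finite weighted energy,
`∫₀^∞ |∂_r f|² ω₀/r dr ≥ c ∫₀^∞ f²/(1+r²) ω₀/r dr`. -/
theorem hardy_inequality_omega0 :
    ∃ c : ℝ, 0 < c ∧ ∀ f : ℝ → ℝ,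
      ContinuousOn f (Set.Ici 0) →
      (∀ r ∈ Set.Ioi (0:ℝ), DifferentiableAt ℝ f r) →
      IntegrableOn (fun r => ((f r)^2/(1+r^2) + (deriv f r)^2) * (omega0 r / r))
        (Set.Ioi 0) →
      c * (∫ r in Set.Ioi (0:ℝ), ((f r)^2/(1+r^2)) * (omega0 r / r)) ≤
        ∫ r in Set.Ioi (0:ℝ), (deriv f r)^2 * (omega0 r / r) := by
  refine ⟨1 / 8, by norm_num, fun f hf hdiff hS => ?_⟩
  obtain ⟨hB, hA⟩ := integrableOn_hardy_terms (hf.mono Ioi_subset_Ici_self) hS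
  exact mul_setIntegral_Ioi_le_of_forall_Ioc (G := fun r => f r ^ 2 * hardyPhi r) hB
    (fun _ _ => mul_setIntegral_Ioc_le_sq_mul_hardyPhi_sub hdiff hA hB)
    (fun _ => frequently_abs_sq_mul_hardyPhi_lt_nhdsGT hB)
    (fun _ => frequently_abs_sq_mul_hardyPhi_lt_atTop hB)
end
end
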